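/- Let g ≥ 1, let i, j be integers with 0 ≤ j ≤ i and i + j = g, let m ≥ j be an integer, and let c ∈ O_L^×. Let F = [[T^m, c·T^i],[T^j, 0]] ∈ GL_2(L) (the normal form of the Frobenius of an O_F-display of type (j, n) with n = min{m, i}, in the sense of Andreatta–Goren). Then μ(F) = (i, j), and μ(F·σ(F)) = (2i + j − min(m,i), j + min(m,i)); in particular the smaller Hodge slope of F equals j and the smaller Hodge slope of F·σ(F) equals n + j where n = min{m, i}. -/
import Mathlib


/-!
Statement 17.  `L` is a field with a surjective discrete valuation `v` (encoded
as in the context: multiplicative on nonzero elements, ultrametric, with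
uniformizer `T`, `v T = 1`) and `σ` a ring automorphism with `v ∘ σ = v`,
`σ T = T`.  For `0 ≤ j ≤ i`, `i + j = g`, `m ≥ j`, `c ∈ O_L^×`, and
`F = [[T^m, c·T^i],[T^j, 0]]`:
`μ(F) = (i, j)` and `μ(F·σ(F)) = (2i + j − min(m,i), j + min(m,i))`.
-/

open Matrix

noncomputable section

variable (L : Type) [Field L]

/-- `c ∈ GL_2(O_L)`: entries in the valuation ring, determinant a unit of it. -/
def IsIntUnit (v : L → ℤ) (c : Matrix (Fin 2) (Fin 2) L) : Prop :=
  (∀ i j, c i j = 0 ∨ 0 ≤ v (c i j)) ∧ c.det ≠ 0 ∧ v c.det = 0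

/-- `(μ₁, μ₂)` is the Hodge point of `b ∈ GL_2(L)` (uniformizer `T`). -/
def IsHodgePair (v : L → ℤ) (T : L) (b : Matrix (Fin 2) (Fin 2) L) (μ₁ μ₂ : ℤ) : Prop :=
  μ₂ ≤ μ₁ ∧ ∃ c₁ c₂ : Matrix (Fin 2) (Fin 2) L, IsIntUnit L v c₁ ∧ IsIntUnit L v c₂ ∧
    b = c₁ * Matrix.diagonal ![T ^ μ₁, T ^ μ₂] * c₂

theorem statement_17 (v : L → ℤ) (T : L) (σ : L ≃+* L)
    (hv_mul : ∀ x y, x ≠ 0 → y ≠ 0 → v (x * y) = v x + v y)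
    (hv_add : ∀ x y, x ≠ 0 → y ≠ 0 → x + y ≠ 0 → min (v x) (v y) ≤ v (x + y))
    (hT0 : T ≠ 0) (hT1 : v T = 1)
    (hσv : ∀ x, x ≠ 0 → v (σ x) = v x) (hσT : σ T = T)
    (g : ℕ) (hg : 1 ≤ g) (i j : ℤ) (hj0 : 0 ≤ j) (hji : j ≤ i) (hij : i + j = g)
    (m : ℤ) (hm : j ≤ m) (c : L) (hc0 : c ≠ 0) (hcv : v c = 0) :
    IsHodgePair L v T !![T ^ m, c * T ^ i; T ^ j, 0] i j ∧
    IsHodgePair L v T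
      (!![T ^ m, c * T ^ i; T ^ j, 0] * (!![T ^ m, c * T ^ i; T ^ j, 0]).map ⇑σ)
      (2 * i + j - min m i) (j + min m i) := by
  -- basic valuation facts
  have hv1 : v (1 : L) = 0 := by
    have := hv_mul 1 1 one_ne_zero one_ne_zero; simp at this; omega
  have hvn1 : v (-1 : L) = 0 := by
    have := hv_mul (-1) (-1) (by norm_num) (by norm_num); simp at this; omega
  have hvneg : ∀ x : L, x ≠ 0 → v (-x) = v x := by
    intro x hx
    have h := hv_mul (-1) x (by norm_num) hx
    rw [neg_one_mul] at h; rw [h, hvn1]; omega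
  have hvpowN : ∀ k : ℕ, v (T ^ (k : ℤ)) = k := by
    intro k
    induction k with
    | zero => simpa using hv1
    | succ n ih =>
      have : ((n + 1 : ℕ) : ℤ) = (n : ℤ) + 1 := by push_cast; ring
      rw [this, zpow_add₀ hT0, hv_mul _ _ (zpow_ne_zero _ hT0) (by simpa using hT0), ih]
      simp [hT1]
  have hvpow : ∀ k : ℤ, v (T ^ k) = k := by
    intro k
    rcases le_or_gt 0 k with h | h
    · obtain ⟨n, rfl⟩ := Int.eq_ofNat_of_zero_le h; exact hvpowN n
    · have h1 : v (T ^ k * T ^ (-k)) = v (T ^ k) + v (T ^ (-k)) :=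
        hv_mul _ _ (zpow_ne_zero _ hT0) (zpow_ne_zero _ hT0)
      rw [← zpow_add₀ hT0] at h1
      simp only [add_neg_cancel, zpow_zero] at h1
      obtain ⟨n, hn⟩ := Int.eq_ofNat_of_zero_le (by omega : (0:ℤ) ≤ -k)
      have h2 := hvpowN n
      rw [← hn] at h2
      omega
  have hσc0 : σ c ≠ 0 := fun h => hc0 (σ.injective (by simp [h]))
  have hvσc : v (σ c) = 0 := by rw [hσv c hc0, hcv]
  -- integrality closure
  have hIadd : ∀ x y : L, (x = 0 ∨ 0 ≤ v x) → (y = 0 ∨ 0 ≤ v y) →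
      (x + y = 0 ∨ 0 ≤ v (x + y)) := by
    intro x y hx hy
    by_cases h : x + y = 0
    · exact Or.inl h
    rcases eq_or_ne x 0 with rfl | hx0
    · simp only [zero_add] at h ⊢; exact Or.inr (hy.resolve_left h)
    rcases eq_or_ne y 0 with rfl | hy0
    · simp only [add_zero] at h ⊢; exact Or.inr (hx.resolve_left h)
    have h1 := hv_add x y hx0 hy0 h
    have h2 := hx.resolve_left hx0
    have h3 := hy.resolve_left hy0
    right; omega
  have hImul : ∀ x y : L, (x = 0 ∨ 0 ≤ v x) → (y = 0 ∨ 0 ≤ v y) →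
      (x * y = 0 ∨ 0 ≤ v (x * y)) := by
    intro x y hx hy
    rcases eq_or_ne x 0 with rfl | hx0; · simp
    rcases eq_or_ne y 0 with rfl | hy0; · simp
    have h2 := hx.resolve_left hx0
    have h3 := hy.resolve_left hy0
    right; rw [hv_mul x y hx0 hy0]; omega
  have hIU : ∀ A B : Matrix (Fin 2) (Fin 2) L,
      IsIntUnit L v A → IsIntUnit L v B → IsIntUnit L v (A * B) := by
    rintro A B ⟨hA, hAd0, hAdv⟩ ⟨hB, hBd0, hBdv⟩
    refine ⟨?_, ?_, ?_⟩
    · intro a b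
      rw [Matrix.mul_apply, Fin.sum_univ_two]
      exact hIadd _ _ (hImul _ _ (hA a 0) (hB 0 b)) (hImul _ _ (hA a 1) (hB 1 b))
    · rw [Matrix.det_mul]; exact mul_ne_zero hAd0 hBd0
    · rw [Matrix.det_mul, hv_mul _ _ hAd0 hBd0, hAdv, hBdv]; ring
  -- the basic integral unit matrices
  have hC1 : IsIntUnit L v !![c, T ^ (m - j); (0:L), 1] := by
    refine ⟨?_, ?_, ?_⟩
    · intro a b
      fin_cases a <;> fin_cases b <;> simp [hcv, hv1, hvpow] <;> omega
    · rw [Matrix.det_fin_two_of]; simp [hc0]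
    · rw [Matrix.det_fin_two_of]; simpa using hcv
  have hC2 : IsIntUnit L v !![(0:L), 1; 1, 0] := by
    refine ⟨?_, ?_, ?_⟩
    · intro a b; fin_cases a <;> fin_cases b <;> simp [hv1]
    · rw [Matrix.det_fin_two_of]; norm_num
    · rw [Matrix.det_fin_two_of]; simpa using hvn1
  have hd : ∀ a b : ℤ, Matrix.diagonal ![T ^ a, T ^ b] = !![T ^ a, 0; 0, T ^ b] := by
    intro a b; ext k l; fin_cases k <;> fin_cases l <;> simp [Matrix.diagonal]
  have hFσ : (!![T ^ m, c * T ^ i; T ^ j, 0]).map ⇑σ = !![T ^ m, σ c * T ^ i; T ^ j, 0] := by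
    ext k l
    fin_cases k <;> fin_cases l <;> simp [map_zpow₀, hσT]
  have e1 : T ^ m ≠ 0 := zpow_ne_zero _ hT0
  have e2 : T ^ i ≠ 0 := zpow_ne_zero _ hT0
  have e3 : T ^ j ≠ 0 := zpow_ne_zero _ hT0
  constructor
  · refine ⟨hji, !![c, T ^ (m - j); 0, 1], !![(0:L), 1; 1, 0], hC1, hC2, ?_⟩
    rw [hd]
    simp only [Matrix.mul_fin_two]
    ext k l
    fin_cases k <;> fin_cases l <;> try simp
    all_goals try simp only [two_mul, zpow_sub₀ hT0, zpow_add₀ hT0]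
    all_goals try field_simp
    all_goals ring
  · rcases le_or_gt m i with hmi | hmi
    · rw [min_eq_left hmi]
      have hA : IsIntUnit L v !![(1:L), T ^ (i - m); 0, 1] := by
        refine ⟨?_, ?_, ?_⟩
        · intro a b
          fin_cases a <;> fin_cases b <;> simp [hv1, hvpow] <;> omega
        · rw [Matrix.det_fin_two_of]; norm_num
        · rw [Matrix.det_fin_two_of]; simpa using hv1
      have hB : IsIntUnit L v !![-σ c, 0; (0:L), 1] := by
        refine ⟨?_, ?_, ?_⟩
        · intro a b; fin_cases a <;> fin_cases b <;> simp [hv1, hvneg _ hσc0, hvσc]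
        · rw [Matrix.det_fin_two_of]; simpa using hσc0
        · rw [Matrix.det_fin_two_of]; simpa using (hvneg _ hσc0).trans hvσc
      have hCm : IsIntUnit L v !![(1:L), 0; σ c * T ^ (i - m), 1] := by
        refine ⟨?_, ?_, ?_⟩
        · intro a b
          fin_cases a <;> fin_cases b <;>
            simp [hv1, hv_mul _ _ hσc0 (zpow_ne_zero _ hT0), hvσc, hvpow] <;> omega
        · rw [Matrix.det_fin_two_of]; norm_num
        · rw [Matrix.det_fin_two_of]; simpa using hv1
      refine ⟨by omega, !![c, T ^ (m - j); 0, 1] * !![(1:L), T ^ (i - m); 0, 1],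
        !![-σ c, 0; (0:L), 1] * !![(1:L), 0; σ c * T ^ (i - m), 1] * !![(0:L), 1; 1, 0],
        hIU _ _ hC1 hA, hIU _ _ (hIU _ _ hB hCm) hC2, ?_⟩
      rw [hFσ, hd]
      simp only [Matrix.mul_fin_two]
      ext k l
      fin_cases k <;> fin_cases l <;> try simp
      all_goals try simp only [two_mul, zpow_sub₀ hT0, zpow_add₀ hT0]
      all_goals try field_simp
      all_goals ring
    · rw [min_eq_right (le_of_lt hmi)]
      have hD : IsIntUnit L v !![(1:L), 0; T ^ (m - i), σ c] := by
        refine ⟨?_, ?_, ?_⟩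
        · intro a b
          fin_cases a <;> fin_cases b <;> simp [hv1, hvσc, hvpow] <;> omega
        · rw [Matrix.det_fin_two_of]; simpa using hσc0
        · rw [Matrix.det_fin_two_of]; simpa using hvσc
      refine ⟨by omega, !![c, T ^ (m - j); 0, 1], !![(1:L), 0; T ^ (m - i), σ c],
        hC1, hD, ?_⟩
      rw [hFσ, hd]
      have : 2 * i + j - i = i + j := by ring
      rw [this]
      simp only [Matrix.mul_fin_two]
      ext k l
      fin_cases k <;> fin_cases l <;> try simp
      all_goals try simp only [two_mul, zpow_sub₀ hT0, zpow_add₀ hT0]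
      all_goals try field_simp
      all_goals ring

end
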